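/- Let A be a commutative ring and f ∈ A. A morphism τ: M → N of A-modules is an isomorphism if and only if both the localization τ[1/f]: M[1/f] → N[1/f] and the reduction τ ⊗_A A/f together with the induced map Tor_1^A(M, A/f) → Tor_1^A(N, A/f) are isomorphisms. In particular, for complexes: τ: M → N in D(A) is a quasi-isomorphism if and only if τ[1/f] and τ ⊗^L_A A/f are quasi-isomorphisms. -/

import Mathlib

/-!
An element of `ker τ` dies in `M[1/f]`, so it is killed by some `f ^ n`; peeling off one factor
of `f` at a time, injectivity on `f`-torsion forces it to vanish. Dually, surjectivity after
localization makes some `f ^ n • y` a value of `τ`, and one factor of `f` at a time is removed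
using that `τ` reflects `f`-divisibility and is surjective on `f`-torsion.
-/

namespace LocalizedModule

variable {R : Type*} [CommSemiring R] {S : Submonoid R}
  {M N : Type*} [AddCommMonoid M] [Module R M] [AddCommMonoid N] [Module R N]

theorem exists_smul_eq_smul_of_injective_map {τ : M →ₗ[R] N}
    (hτ : Function.Injective (map S τ)) {x y : M} (hxy : τ x = τ y) :
    ∃ s : S, s • x = s • y := by
  have : mk x (1 : S) = mk y 1 := hτ (by rw [map_mk, map_mk, hxy])
  obtain ⟨s, hs⟩ := mk_eq.mp this
  exact ⟨s, by simpa using hs⟩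

theorem exists_smul_mem_range_of_surjective_map {τ : M →ₗ[R] N}
    (hτ : Function.Surjective (map S τ)) (y : N) :
    ∃ s : S, s • y ∈ LinearMap.range τ := by
  obtain ⟨m, hm⟩ := hτ (mk y 1)
  induction m using induction_on with
  | h x s =>
    rw [map_mk, mk_eq] at hm
    obtain ⟨u, hu⟩ := hm
    refine ⟨u * s, u • x, ?_⟩
    simpa [mul_smul] using hu

end LocalizedModule

namespace LinearMap

theorem eq_zero_of_pow_smul_eq_zero {R M N : Type*} [Semiring R] [AddCommMonoid M] [Module R M]
    [AddCommMonoid N] [Module R N] {f : R} {τ : M →ₗ[R] N}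
    (htors : ∀ x : M, f • x = 0 → τ x = 0 → x = 0) :
    ∀ (n : ℕ) {x : M}, f ^ n • x = 0 → τ x = 0 → x = 0
  | 0, x, hx, _ => by simpa using hx
  | n + 1, x, hx, hτx =>
    eq_zero_of_pow_smul_eq_zero htors n (htors _ (by rwa [smul_smul, ← pow_succ'])
      (by rw [map_smul, hτx, smul_zero])) hτx

section Ring

variable {R M N : Type*} [Ring R] [AddCommGroup M] [Module R M] [AddCommGroup N] [Module R N]
  {f : R} {τ : M →ₗ[R] N}

/-- Inductive step: from `τ x = f • y` get `x = f • w`; then `τ w - y` is `f`-torsion, hence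
`τ v` for some `v`, and `y = τ (w - v)`. -/
theorem mem_range_of_pow_smul_mem_range
    (hdiv : ∀ x : M, (∃ z : N, τ x = f • z) → ∃ w : M, x = f • w)
    (htors : ∀ y : N, f • y = 0 → ∃ x : M, f • x = 0 ∧ τ x = y) :
    ∀ (n : ℕ) {y : N}, f ^ n • y ∈ range τ → y ∈ range τ
  | 0, y, hy => by simpa using hy
  | n + 1, y, ⟨x, hx⟩ => by
    obtain ⟨w, rfl⟩ := hdiv x ⟨f ^ n • y, by rw [hx, smul_smul, ← pow_succ']⟩
    have hw : f • (τ w - f ^ n • y) = 0 := by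
      rw [smul_sub, ← map_smul, hx, smul_smul, ← pow_succ', sub_self]
    obtain ⟨v, -, hv⟩ := htors _ hw
    exact mem_range_of_pow_smul_mem_range hdiv htors n ⟨w - v, by rw [map_sub, hv, sub_sub_cancel]⟩

end Ring

section CommRing

variable {R M N : Type*} [CommRing R] [AddCommGroup M] [Module R M] [AddCommGroup N] [Module R N]
  {f : R} {τ : M →ₗ[R] N}

theorem injective_of_injective_localizedModuleMap_powers
    (hloc : Function.Injective (LocalizedModule.map (.powers f) τ))
    (htors : ∀ x : M, f • x = 0 → τ x = 0 → x = 0) :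
    Function.Injective τ := by
  intro a b hab
  obtain ⟨⟨_, n, rfl⟩, hn⟩ := LocalizedModule.exists_smul_eq_smul_of_injective_map hloc hab
  refine sub_eq_zero.mp (eq_zero_of_pow_smul_eq_zero htors n ?_ (by rw [map_sub, hab, sub_self]))
  rw [smul_sub, sub_eq_zero]
  exact hn

theorem surjective_of_surjective_localizedModuleMap_powers
    (hloc : Function.Surjective (LocalizedModule.map (.powers f) τ))
    (hdiv : ∀ x : M, (∃ z : N, τ x = f • z) → ∃ w : M, x = f • w)
    (htors : ∀ y : N, f • y = 0 → ∃ x : M, f • x = 0 ∧ τ x = y) :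
    Function.Surjective τ := fun y ↦ by
  obtain ⟨⟨_, n, rfl⟩, hn⟩ := LocalizedModule.exists_smul_mem_range_of_surjective_map hloc y
  exact mem_range_of_pow_smul_mem_range hdiv htors n hn

end CommRing

end LinearMap

/-- Stratification principle: a map `τ : M → N` of `A`-modules is an isomorphism if and
only if its localization away from `f` is an isomorphism, its reduction mod `f`
(the induced map `M/fM → N/fN`) is an isomorphism, and the induced map on `f`-torsion
(i.e. on `Tor_1` against the Koszul complex `A/^L f`, which is `ker (f : M → M)`)
is an isomorphism.  The quotient and kernel conditions are stated element-wise. -/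
theorem stmt7 (A : Type*) [CommRing A] (f : A)
    (M N : Type*) [AddCommGroup M] [Module A M] [AddCommGroup N] [Module A N]
    (τ : M →ₗ[A] N) :
    Function.Bijective τ ↔
      (Function.Bijective (LocalizedModule.map (Submonoid.powers f) τ) ∧
       ((∀ x : M, (∃ z : N, τ x = f • z) → ∃ w : M, x = f • w) ∧
        (∀ y : N, ∃ x : M, ∃ z : N, y = τ x + f • z)) ∧
       ((∀ x : M, f • x = 0 → τ x = 0 → x = 0) ∧
        (∀ y : N, f • y = 0 → ∃ x : M, f • x = 0 ∧ τ x = y))) := by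
  constructor
  · rintro ⟨hinj, hsurj⟩
    refine ⟨⟨LocalizedModule.map_injective _ τ hinj, LocalizedModule.map_surjective _ τ hsurj⟩,
      ⟨?_, fun y ↦ ?_⟩, ⟨fun x _ hx ↦ hinj (by rw [hx, map_zero]), fun y hy ↦ ?_⟩⟩
    · rintro x ⟨z, hz⟩
      obtain ⟨w, rfl⟩ := hsurj z
      exact ⟨w, hinj (by rw [hz, map_smul])⟩
    · obtain ⟨x, rfl⟩ := hsurj y
      exact ⟨x, 0, by rw [smul_zero, add_zero]⟩
    · obtain ⟨x, rfl⟩ := hsurj y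
      exact ⟨x, hinj (by rw [map_smul, hy, map_zero]), rfl⟩
  · rintro ⟨⟨hlinj, hlsurj⟩, ⟨hdiv, -⟩, hinjtors, hsurjtors⟩
    exact ⟨LinearMap.injective_of_injective_localizedModuleMap_powers hlinj hinjtors,
      LinearMap.surjective_of_surjective_localizedModuleMap_powers hlsurj hdiv hsurjtors⟩
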